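/- Let d ≥ 2 and m ≥ 1 be integers, and let n ≥ 1 and n' ≥ 1 be integers with m ≤ d^{n+1} − 3 and m ≤ d^{n'+1} − 3. Then B(d,m,n) = B(d,m,n'); that is, the value of the Ewing–Schober combinatorial sum is independent of the admissible choice of n. -/

import Mathlib

/-!
In `B(d,m,n+1)` the first index `j_1` carries the weight `d^{n+1} - 1`, which exceeds `m + 1`
as soon as `m + 2 < d^{n+1}`; so every admissible tuple has `j_1 = 0`. Its factor is
`C_0(…) = 1`, and dropping `j_1` turns the remaining constraint and binomial arguments
exactly into those of `B(d,m,n)`. Hence `B(d,m,·)` is constant from the first admissible `n` on.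
-/

/-- Generalized binomial coefficient `C_j(x) = x(x-1)⋯(x-j+1)/j!`, with `C_0(x) = 1`. -/
noncomputable def genBinom (x : ℚ) (j : ℕ) : ℚ :=
  (∏ i ∈ Finset.range j, (x - (i : ℚ))) / (Nat.factorial j : ℚ)

/-- The Ewing–Schober combinatorial formula `B(d,m,n)`: the sum is over all tuples
`(j_1,…,j_n)` of nonnegative integers (here `j : Fin n → ℕ`, 0-indexed, so `j k`
corresponds to `j_{k+1}`) satisfying `Σ_{k=1}^n (d^{n-k+1} - 1) j_k = m + 1`, of
`Π_{k=1}^n C_{j_k}(m/d^{n-k+1} - Σ_{l=1}^{k-1} d^{k-l} j_l)`, multiplied by `-(1/m)`. -/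
noncomputable def multibrotB (d m n : ℕ) : ℚ :=
  -(1 / (m : ℚ)) * ∑ᶠ j : Fin n → ℕ,
    if (∑ k : Fin n, (d ^ (n - k.val) - 1) * j k) = m + 1 then
      ∏ k : Fin n,
        genBinom ((m : ℚ) / (d : ℚ) ^ (n - k.val)
          - ∑ l ∈ Finset.univ.filter (fun l : Fin n => l < k),
              (d : ℚ) ^ (k.val - l.val) * ((j l : ℕ) : ℚ)) (j k)
    else 0

open Function Set

theorem finsum_eq_finsum_comp_of_support_subset_range {α β M : Type*} [AddCommMonoid M]
    {f : α → M} {g : β → α} (hg : Injective g) (hf : support f ⊆ range g) :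
    ∑ᶠ a, f a = ∑ᶠ b, f (g b) := by
  rw [← finsum_mem_range hg, ← finsum_mem_univ]
  exact finsum_mem_inter_support_eq' f _ _ fun a ha => by simpa using hf ha

def multibrotWeight (d n : ℕ) (j : Fin n → ℕ) : ℕ :=
  ∑ k : Fin n, (d ^ (n - k.val) - 1) * j k

noncomputable def multibrotArg (d m n : ℕ) (j : Fin n → ℕ) (k : Fin n) : ℚ :=
  (m : ℚ) / (d : ℚ) ^ (n - k.val)
    - ∑ l ∈ Finset.univ.filter (fun l : Fin n => l < k), (d : ℚ) ^ (k.val - l.val) * ((j l : ℕ) : ℚ)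

noncomputable def multibrotTerm (d m n : ℕ) (j : Fin n → ℕ) : ℚ :=
  if multibrotWeight d n j = m + 1 then ∏ k, genBinom (multibrotArg d m n j k) (j k) else 0

theorem multibrotB_eq_finsum (d m n : ℕ) :
    multibrotB d m n = -(1 / (m : ℚ)) * ∑ᶠ j, multibrotTerm d m n j :=
  rfl

@[simp]
theorem genBinom_zero (x : ℚ) : genBinom x 0 = 1 := by
  simp [genBinom]

theorem multibrotWeight_cons (d n a : ℕ) (t : Fin n → ℕ) :
    multibrotWeight d (n + 1) (Fin.cons a t) = (d ^ (n + 1) - 1) * a + multibrotWeight d n t := by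
  simp [multibrotWeight, Fin.sum_univ_succ]

theorem multibrotArg_cons_zero_succ (d m n : ℕ) (t : Fin n → ℕ) (k : Fin n) :
    multibrotArg d m (n + 1) (Fin.cons 0 t) k.succ = multibrotArg d m n t k := by
  simp [multibrotArg, Finset.sum_filter, Fin.sum_univ_succ, Fin.succ_lt_succ_iff]

theorem multibrotTerm_cons_zero (d m n : ℕ) (t : Fin n → ℕ) :
    multibrotTerm d m (n + 1) (Fin.cons 0 t) = multibrotTerm d m n t := by
  simp [multibrotTerm, multibrotWeight_cons, Fin.prod_univ_succ, multibrotArg_cons_zero_succ]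

theorem multibrotTerm_eq_zero_of_head_ne_zero {d m n : ℕ} (h : m + 2 < d ^ (n + 1))
    {j : Fin (n + 1) → ℕ} (hj : j 0 ≠ 0) : multibrotTerm d m (n + 1) j = 0 := by
  have hweight : m + 1 < multibrotWeight d (n + 1) j := by
    rw [← Fin.cons_self_tail j, multibrotWeight_cons]
    have : d ^ (n + 1) - 1 ≤ (d ^ (n + 1) - 1) * j 0 := Nat.le_mul_of_pos_right _ (by omega)
    omega
  simp [multibrotTerm, hweight.ne']

theorem multibrotB_succ {d m n : ℕ} (h : m + 2 < d ^ (n + 1)) :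
    multibrotB d m (n + 1) = multibrotB d m n := by
  have hsupp : support (multibrotTerm d m (n + 1)) ⊆ range (Fin.cons 0) := fun j hj =>
    ⟨Fin.tail j, by
      rw [← not_imp_comm.mp (multibrotTerm_eq_zero_of_head_ne_zero h) hj, Fin.cons_self_tail]⟩
  rw [multibrotB_eq_finsum, multibrotB_eq_finsum,
    finsum_eq_finsum_comp_of_support_subset_range (Fin.cons_right_injective 0) hsupp]
  simp only [multibrotTerm_cons_zero]

theorem multibrotB_eq_of_le {d m n n' : ℕ} (hnn' : n ≤ n') (h : m + 2 < d ^ (n + 1)) :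
    multibrotB d m n' = multibrotB d m n := by
  have hd : 0 < d := Nat.pos_of_ne_zero (by rintro rfl; simp at h)
  induction n', hnn' using Nat.le_induction with
  | base => rfl
  | succ k hk ih =>
    have : d ^ (n + 1) ≤ d ^ (k + 1) := Nat.pow_le_pow_right hd (by omega)
    rw [multibrotB_succ (by omega), ih]

theorem multibrotB_indep_of_n_general (d m n n' : ℕ) (hm : 1 ≤ m)
    (hmn : m ≤ d ^ (n + 1) - 3) (hmn' : m ≤ d ^ (n' + 1) - 3) :
    multibrotB d m n = multibrotB d m n' := by
  rcases le_total n n' with h | h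
  · exact (multibrotB_eq_of_le h (by omega)).symm
  · exact multibrotB_eq_of_le h (by omega)

theorem multibrotB_indep_of_n (d m n n' : ℕ) (hd : 2 ≤ d) (hm : 1 ≤ m)
    (hn : 1 ≤ n) (hn' : 1 ≤ n')
    (hmn : m ≤ d ^ (n + 1) - 3) (hmn' : m ≤ d ^ (n' + 1) - 3) :
    multibrotB d m n = multibrotB d m n' :=
  multibrotB_indep_of_n_general d m n n' hm hmn hmn'
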